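/- (Remainder Lemma, vanishing part.) Assume the avoidance hypothesis. Then for every u ∈ ℝ² with ‖u‖ ≤ 1, if c·u₁ + d·u₂ = 0 then g(u) = 0. -/

import Mathlib

noncomputable section

/-- Matrix–vector multiplication, viewed as a map on the Euclidean plane. -/
def mv (M : Matrix (Fin 2) (Fin 2) ℝ) (u : EuclideanSpace ℝ (Fin 2)) :
    EuclideanSpace ℝ (Fin 2) := WithLp.toLp 2 (M.mulVec u)

/-- Range `r(p) = √((p₁−a)² + (p₂−b)²)` to the sensor located at `(a, b)`. -/
def rr (a b : ℝ) (p : EuclideanSpace ℝ (Fin 2)) : ℝ :=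
  Real.sqrt ((p 0 - a) ^ 2 + (p 1 - b) ^ 2)

/-- Bearing `θ(p)`: polar angle in `(−π, π]` of the complex number `(p₁−a) + i(p₂−b)`. -/
def theta (a b : ℝ) (p : EuclideanSpace ℝ (Fin 2)) : ℝ :=
  Complex.arg ⟨p 0 - a, p 1 - b⟩

/-- Jacobian matrix of the range–bearing measurement map at `p`. -/
def Jh (a b : ℝ) (p : EuclideanSpace ℝ (Fin 2)) : Matrix (Fin 2) (Fin 2) ℝ :=
  !![(p 0 - a) / rr a b p, (p 1 - b) / rr a b p;
     -(p 1 - b) / (rr a b p) ^ 2, (p 0 - a) / (rr a b p) ^ 2]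

/-- The range–bearing measurement map `h(p) = (r(p), θ(p))`. -/
def hMeas (a b : ℝ) (p : EuclideanSpace ℝ (Fin 2)) : EuclideanSpace ℝ (Fin 2) :=
  WithLp.toLp 2 ![rr a b p, theta a b p]

/-- The linearization remainder `g(u) = h(x + Eu) − h(x) − J_h(x)·(Eu)`. -/
def gRem (a b : ℝ) (x : EuclideanSpace ℝ (Fin 2)) (E : Matrix (Fin 2) (Fin 2) ℝ)
    (u : EuclideanSpace ℝ (Fin 2)) : EuclideanSpace ℝ (Fin 2) :=
  hMeas a b (x + mv E u) - hMeas a b x - mv (Jh a b x) (mv E u)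

/-!
Write `o = (a, b)`. The condition `c u₁ + d u₂ = 0` says that `Eu` is parallel to `x - o`,
and `x ≠ o` because `x` itself lies in the ellipsoid, so `Eu = t (x - o)`. The points
`x + s Eu = o + (1 + s t)(x - o)`, `s ∈ [0, 1]`, lie in the ellipsoid; if `1 + t ≤ 0`, the one with
`s = -1/t` would be `o`, on the radial. Hence `1 + t > 0`, and along the ray from `o` through `x`
the range grows linearly, `r(x + Eu) = (1 + t) r(x)`, while the bearing stays constant; this is
exactly the first-order prediction `J_h(x) Eu = (t r(x), 0)`.
-/

lemma mv_apply (M : Matrix (Fin 2) (Fin 2) ℝ) (u : EuclideanSpace ℝ (Fin 2)) (i : Fin 2) :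
    mv M u i = M i 0 * u 0 + M i 1 * u 1 := by
  simp [mv, Matrix.mulVec_eq_sum, Fin.sum_univ_two, mul_comm]

lemma mv_smul (M : Matrix (Fin 2) (Fin 2) ℝ) (s : ℝ) (u : EuclideanSpace ℝ (Fin 2)) :
    mv M (s • u) = s • mv M u := by
  rw [mv, mv, WithLp.ofLp_smul, Matrix.mulVec_smul, WithLp.toLp_smul]

lemma EuclideanSpace.exists_eq_smul_of_cross_eq_zero {v w : EuclideanSpace ℝ (Fin 2)}
    (hw : w ≠ 0) (h : v 0 * w 1 = v 1 * w 0) : ∃ t : ℝ, v = t • w := by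
  have hw' : w 0 ≠ 0 ∨ w 1 ≠ 0 := by
    by_contra! h0
    exact hw (by ext i; fin_cases i <;> simp [h0.1, h0.2])
  rcases hw' with h0 | h1
  · refine ⟨v 0 / w 0, ?_⟩
    ext i
    fin_cases i
    · simp [h0]
    · simp only [Fin.mk_one, Fin.isValue, PiLp.smul_apply, smul_eq_mul]
      field_simp
      linarith
  · refine ⟨v 1 / w 1, ?_⟩
    ext i
    fin_cases i
    · simp only [Fin.zero_eta, Fin.isValue, PiLp.smul_apply, smul_eq_mul]
      field_simp
      linarith
    · simp [h1]

lemma one_add_pos_of_forall_add_smul_ne_zero {V : Type*} [AddCommGroup V] [Module ℝ V]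
    {w : V} {t : ℝ} (h : ∀ s ∈ Set.Icc (0 : ℝ) 1, w + (s * t) • w ≠ 0) : 0 < 1 + t := by
  by_contra! ht
  have hneg : 1 ≤ -t := by linarith
  refine h (-t)⁻¹ ⟨by positivity, inv_le_one_of_one_le₀ hneg⟩ ?_
  rw [inv_neg, neg_mul, inv_mul_cancel₀ (by linarith), neg_one_smul, add_neg_cancel]

lemma rr_eq_norm (a b : ℝ) (p : EuclideanSpace ℝ (Fin 2)) : rr a b p = ‖p - !₂[a, b]‖ := by
  simp [rr, EuclideanSpace.norm_eq, Fin.sum_univ_two]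

lemma rr_pos {a b : ℝ} {x : EuclideanSpace ℝ (Fin 2)} (hx : x ≠ !₂[a, b]) : 0 < rr a b x := by
  rwa [rr_eq_norm, norm_pos_iff, sub_ne_zero]

lemma rr_sq (a b : ℝ) (x : EuclideanSpace ℝ (Fin 2)) :
    rr a b x ^ 2 = (x 0 - a) ^ 2 + (x 1 - b) ^ 2 :=
  Real.sq_sqrt (by positivity)

lemma rr_add_smul_sub {a b t : ℝ} (ht : 0 ≤ 1 + t) (x : EuclideanSpace ℝ (Fin 2)) :
    rr a b (x + t • (x - !₂[a, b])) = (1 + t) * rr a b x := by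
  have : x + t • (x - !₂[a, b]) - !₂[a, b] = (1 + t) • (x - !₂[a, b]) := by module
  rw [rr_eq_norm, rr_eq_norm, this, norm_smul, Real.norm_of_nonneg ht]

lemma theta_add_smul_sub {a b t : ℝ} (ht : 0 < 1 + t) (x : EuclideanSpace ℝ (Fin 2)) :
    theta a b (x + t • (x - !₂[a, b])) = theta a b x := by
  have : (⟨(x + t • (x - !₂[a, b])) 0 - a, (x + t • (x - !₂[a, b])) 1 - b⟩ : ℂ) =
      ((1 + t : ℝ) : ℂ) * ⟨x 0 - a, x 1 - b⟩ := by
    apply Complex.ext <;>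
      simp only [Fin.isValue, PiLp.add_apply, PiLp.smul_apply, PiLp.sub_apply, smul_eq_mul,
        Matrix.cons_val_zero, Matrix.cons_val_one, Matrix.cons_val_fin_one, Complex.ofReal_add,
        Complex.ofReal_one, Complex.mul_re, Complex.mul_im, Complex.add_re, Complex.add_im,
        Complex.one_re, Complex.one_im, Complex.ofReal_re, Complex.ofReal_im] <;>
      ring
  rw [theta, theta, this, Complex.arg_real_mul _ ht]

lemma mv_Jh_smul_sub {a b : ℝ} {x : EuclideanSpace ℝ (Fin 2)} (hx : x ≠ !₂[a, b]) (t : ℝ) :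
    mv (Jh a b x) (t • (x - !₂[a, b])) = !₂[t * rr a b x, 0] := by
  have hr := (rr_pos hx).ne'
  ext i
  fin_cases i <;>
    simp only [Jh, mv_apply, Fin.isValue, Fin.zero_eta, Fin.mk_one, Matrix.of_apply,
      Matrix.cons_val', Matrix.cons_val_zero, Matrix.cons_val_one, Matrix.cons_val_fin_one,
      PiLp.smul_apply, PiLp.sub_apply, smul_eq_mul, neg_sub] <;>
    field_simp
  · rw [rr_sq]
    ring
  · ring

theorem hMeas_add_smul_sub_sub_mv_Jh_eq_zero {a b t : ℝ} {x : EuclideanSpace ℝ (Fin 2)}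
    (hx : x ≠ !₂[a, b]) (ht : 0 < 1 + t) :
    hMeas a b (x + t • (x - !₂[a, b])) - hMeas a b x - mv (Jh a b x) (t • (x - !₂[a, b])) = 0 := by
  ext i
  fin_cases i
  · simp only [hMeas, rr_add_smul_sub ht.le, mv_Jh_smul_sub hx, Fin.zero_eta, Fin.isValue,
      PiLp.sub_apply, Matrix.cons_val_zero, PiLp.zero_apply]
    ring
  · simp [hMeas, theta_add_smul_sub ht, mv_Jh_smul_sub hx]

theorem gRem_eq_zero_of_degenerate_general
    (a b : ℝ) (x : EuclideanSpace ℝ (Fin 2)) (E : Matrix (Fin 2) (Fin 2) ℝ)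
    (havoid : ∀ u : EuclideanSpace ℝ (Fin 2), ‖u‖ ≤ 1 →
      ¬((x + mv E u) 0 ≤ a ∧ (x + mv E u) 1 = b))
    (c d : ℝ)
    (hc : c = E 0 0 * (x 1 - b) - E 1 0 * (x 0 - a))
    (hd : d = E 0 1 * (x 1 - b) - E 1 1 * (x 0 - a)) :
    ∀ u : EuclideanSpace ℝ (Fin 2), ‖u‖ ≤ 1 →
      c * u 0 + d * u 1 = 0 → gRem a b x E u = 0 := by
  intro u hu hcd
  have ne_center : ∀ s : ℝ, 0 ≤ s → s ≤ 1 → x + mv E (s • u) ≠ !₂[a, b] := by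
    intro s hs0 hs1 h
    refine havoid (s • u) ?_ (by simp [h])
    rw [norm_smul, Real.norm_of_nonneg hs0]
    exact mul_le_one₀ hs1 (norm_nonneg u) hu
  have hx : x ≠ !₂[a, b] := by simpa [mv] using ne_center 0 le_rfl zero_le_one
  have hcross : mv E u 0 * (x - !₂[a, b]) 1 = mv E u 1 * (x - !₂[a, b]) 0 := by
    subst hc hd
    simp only [Fin.isValue, mv_apply, PiLp.sub_apply, Matrix.cons_val_one,
      Matrix.cons_val_fin_one, Matrix.cons_val_zero]
    linear_combination hcd
  obtain ⟨t, ht⟩ := EuclideanSpace.exists_eq_smul_of_cross_eq_zero (sub_ne_zero.mpr hx) hcross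
  have hpos : 0 < 1 + t := by
    refine one_add_pos_of_forall_add_smul_ne_zero (w := x - !₂[a, b])
      fun s hs h0 => ne_center s hs.1 hs.2 ?_
    rw [mv_smul, ht, smul_smul, ← sub_eq_zero, ← h0]
    abel
  rw [gRem, ht]
  exact hMeas_add_smul_sub_sub_mv_Jh_eq_zero hx hpos

/-- **Remainder Lemma, vanishing part.** Under the avoidance hypothesis, for every `u`
with `‖u‖ ≤ 1`, if `c·u₁ + d·u₂ = 0` then `g(u) = 0`. -/
theorem gRem_eq_zero_of_degenerate
    (a b : ℝ) (x : EuclideanSpace ℝ (Fin 2)) (E : Matrix (Fin 2) (Fin 2) ℝ)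
    (hE : 0 < E.det)
    (havoid : ∀ u : EuclideanSpace ℝ (Fin 2), ‖u‖ ≤ 1 →
      ¬((x + mv E u) 0 ≤ a ∧ (x + mv E u) 1 = b))
    (c d : ℝ)
    (hc : c = E 0 0 * (x 1 - b) - E 1 0 * (x 0 - a))
    (hd : d = E 0 1 * (x 1 - b) - E 1 1 * (x 0 - a)) :
    ∀ u : EuclideanSpace ℝ (Fin 2), ‖u‖ ≤ 1 →
      c * u 0 + d * u 1 = 0 → gRem a b x E u = 0 :=
  gRem_eq_zero_of_degenerate_general a b x E havoid c d hc hd
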